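/- The evolutional functions U_t of a centered integrable measure μ on ℤ are convex in x (i.e., U_t(x+1) + U_t(x−1) ≥ 2U_t(x) for all x ∈ ℤ) and nondecreasing in t (U_t(x) ≤ U_{t+1}(x) for all t, x). -/
import Mathlib


open scoped BigOperators

/-- A probability mass function on the integers with finite first moment and mean zero. -/
def IsCenteredPMF (μ : ℤ → ℝ) : Prop :=
  (∀ y, 0 ≤ μ y) ∧ HasSum μ 1 ∧ Summable (fun y : ℤ => |(y : ℝ)| * μ y) ∧
    (∑' y : ℤ, (y : ℝ) * μ y) = 0

/-- The potential of a measure on ℤ: . -/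
noncomputable def potential (μ : ℤ → ℝ) (x : ℤ) : ℝ :=
  ∑' y : ℤ, |(x : ℝ) - (y : ℝ)| * μ y

/-- The evolutional functions of μ: `U_0(x) = |x|`,
`U_t(x) = min((U_{t-1}(x-1)+U_{t-1}(x+1))/2, U_μ(x))`. -/
noncomputable def evol (μ : ℤ → ℝ) : ℕ → ℤ → ℝ
  | 0, x => |(x : ℝ)|
  | t + 1, x => min ((evol μ t (x - 1) + evol μ t (x + 1)) / 2) (potential μ x)


lemma summable_abs_kernel {μ : ℤ → ℝ} (hμ : IsCenteredPMF μ) (x : ℤ) :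
    Summable (fun y : ℤ => |(x : ℝ) - (y : ℝ)| * μ y) := by
  obtain ⟨h0, h1, h2, h3⟩ := hμ
  have hs : Summable μ := h1.summable
  refine Summable.of_nonneg_of_le
    (fun y => mul_nonneg (abs_nonneg _) (h0 y))
    (f := fun y : ℤ => |(x : ℝ)| * μ y + |(y : ℝ)| * μ y) ?_ ((hs.mul_left _).add h2)
  intro y
  calc |(x : ℝ) - y| * μ y ≤ (|(x : ℝ)| + |(y : ℝ)|) * μ y :=
        mul_le_mul_of_nonneg_right (abs_sub _ _) (h0 y)
    _ = |(x : ℝ)| * μ y + |(y : ℝ)| * μ y := by ring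

lemma abs_le_potential {μ : ℤ → ℝ} (hμ : IsCenteredPMF μ) (x : ℤ) :
    |(x : ℝ)| ≤ potential μ x := by
  obtain ⟨h0, h1, h2, h3⟩ := hμ
  have hs : Summable μ := h1.summable
  have habs : Summable (fun y : ℤ => |(y : ℝ) * μ y|) := by
    refine h2.congr fun y => ?_
    rw [abs_mul, abs_of_nonneg (h0 y)]
  have hsy : Summable (fun y : ℤ => (y : ℝ) * μ y) := habs.of_abs
  have hkabs : Summable (fun y : ℤ => |((x : ℝ) - y) * μ y|) := by
    refine (summable_abs_kernel ⟨h0, h1, h2, h3⟩ x).congr fun y => ?_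
    rw [abs_mul, abs_of_nonneg (h0 y)]
  have hk : Summable (fun y : ℤ => ((x : ℝ) - y) * μ y) := hkabs.of_abs
  have hval : (∑' y : ℤ, ((x : ℝ) - y) * μ y) = x := by
    have heq : (fun y : ℤ => ((x : ℝ) - y) * μ y)
        = fun y : ℤ => (x : ℝ) * μ y - (y : ℝ) * μ y := by
      funext y; ring
    rw [heq, Summable.tsum_sub (hs.mul_left _) hsy, tsum_mul_left, h1.tsum_eq, h3, mul_one, sub_zero]
  calc |(x : ℝ)| = |∑' y : ℤ, ((x : ℝ) - y) * μ y| := by rw [hval]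
    _ ≤ ∑' y : ℤ, |((x : ℝ) - y) * μ y| := by
        have h := norm_tsum_le_tsum_norm (f := fun y : ℤ => ((x : ℝ) - y) * μ y)
          (by simpa only [Real.norm_eq_abs] using hkabs)
        simpa only [Real.norm_eq_abs] using h
    _ = potential μ x := by
        refine tsum_congr fun y => ?_
        rw [abs_mul, abs_of_nonneg (h0 y)]

lemma potential_convex {μ : ℤ → ℝ} (hμ : IsCenteredPMF μ) (x : ℤ) :
    2 * potential μ x ≤ potential μ (x + 1) + potential μ (x - 1) := by
  obtain ⟨h0, h1, h2, h3⟩ := hμ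
  have hp := summable_abs_kernel ⟨h0, h1, h2, h3⟩ (x + 1)
  have hm := summable_abs_kernel ⟨h0, h1, h2, h3⟩ (x - 1)
  have hx := summable_abs_kernel ⟨h0, h1, h2, h3⟩ x
  have key : ∀ y : ℤ, 2 * (|(x : ℝ) - y| * μ y)
      ≤ |((x+1 : ℤ) : ℝ) - y| * μ y + |((x-1 : ℤ) : ℝ) - y| * μ y := by
    intro y
    have h : 2 * |(x : ℝ) - y| ≤ |((x+1 : ℤ) : ℝ) - y| + |((x-1 : ℤ) : ℝ) - y| := by
      push_cast
      have := abs_add_le ((x : ℝ) + 1 - y) ((x : ℝ) - 1 - y)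
      have h2 : (x : ℝ) + 1 - y + ((x : ℝ) - 1 - y) = 2 * ((x : ℝ) - y) := by ring
      rw [h2] at this
      calc 2 * |(x : ℝ) - y| = |2 * ((x : ℝ) - y)| := by
            rw [abs_mul]; norm_num
        _ ≤ _ := this
    nlinarith [h0 y, mul_le_mul_of_nonneg_right h (h0 y)]
  calc 2 * potential μ x = ∑' y : ℤ, 2 * (|(x : ℝ) - y| * μ y) := by
        rw [potential, tsum_mul_left]
    _ ≤ ∑' y : ℤ, (|((x+1 : ℤ) : ℝ) - y| * μ y + |((x-1 : ℤ) : ℝ) - y| * μ y) :=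
        Summable.tsum_le_tsum key (hx.mul_left 2) (hp.add hm)
    _ = potential μ (x + 1) + potential μ (x - 1) := Summable.tsum_add hp hm
theorem stmt9 (μ : ℤ → ℝ) (hμ : IsCenteredPMF μ) :
    (∀ t : ℕ, ∀ x : ℤ, 2 * evol μ t x ≤ evol μ t (x + 1) + evol μ t (x - 1)) ∧
    (∀ t : ℕ, ∀ x : ℤ, evol μ t x ≤ evol μ (t + 1) x) := by
  have hP := abs_le_potential hμ
  have hPc := potential_convex hμ
  have key : ∀ t : ℕ, (∀ x : ℤ, 2 * evol μ t x ≤ evol μ t (x + 1) + evol μ t (x - 1)) ∧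
      (∀ x : ℤ, evol μ t x ≤ potential μ x) := by
    intro t
    induction t with
    | zero =>
      constructor
      · intro x
        show 2 * |(x : ℝ)| ≤ |((x + 1 : ℤ) : ℝ)| + |((x - 1 : ℤ) : ℝ)|
        push_cast
        have h := abs_add_le ((x : ℝ) + 1) ((x : ℝ) - 1)
        have h2 : (x : ℝ) + 1 + ((x : ℝ) - 1) = 2 * (x : ℝ) := by ring
        rw [h2] at h
        calc 2 * |(x : ℝ)| = |2 * (x : ℝ)| := by rw [abs_mul]; norm_num
          _ ≤ _ := h
      · intro x
        exact hP x
    | succ t ih =>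
      obtain ⟨ihc, ihP⟩ := ih
      have hdef : ∀ x : ℤ, evol μ (t + 1) x
          = min ((evol μ t (x - 1) + evol μ t (x + 1)) / 2) (potential μ x) := fun x => rfl
      -- U_t(z) ≤ A(z) := (U_t(z-1)+U_t(z+1))/2
      have hUA : ∀ z : ℤ, evol μ t z ≤ (evol μ t (z - 1) + evol μ t (z + 1)) / 2 := by
        intro z; have := ihc z; linarith
      constructor
      · intro x
        rw [hdef, hdef, hdef]
        have hidx1 : x + 1 - 1 = x := by ring
        have hidx2 : x - 1 + 1 = x := by ring
        have hidx3 : x + 1 + 1 = x + 2 := by ring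
        have hidx4 : x - 1 - 1 = x - 2 := by ring
        have hc1 := ihc (x + 1)  -- 2 U(x+1) ≤ U(x+2) + U(x)
        have hc2 := ihc (x - 1)  -- 2 U(x-1) ≤ U(x) + U(x-2)
        rw [hidx1, hidx3] at hc1
        rw [hidx2, hidx4] at hc2
        rw [hidx1, hidx3, hidx2, hidx4]
        set a := evol μ t (x - 2)
        set b := evol μ t (x - 1)
        set c := evol μ t x
        set d := evol μ t (x + 1)
        set e := evol μ t (x + 2)
        -- goal: 2 * min ((b+d)/2) (P x) ≤ min ((c+e)/2) (P (x+1)) + min ((a+c)/2) (P (x-1))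
        have hm : min ((b + d) / 2) (potential μ x) ≤ (b + d) / 2 := min_le_left _ _
        have hmP : min ((b + d) / 2) (potential μ x) ≤ potential μ x := min_le_right _ _
        rcases le_total ((c + e) / 2) (potential μ (x + 1)) with h1 | h1 <;>
          rcases le_total ((a + c) / 2) (potential μ (x - 1)) with h2 | h2
        · rw [min_eq_left h1, min_eq_left h2]; linarith
        · rw [min_eq_left h1, min_eq_right h2]
          have hb : b ≤ potential μ (x - 1) := ihP (x - 1)
          linarith
        · rw [min_eq_right h1, min_eq_left h2]
          have hd : d ≤ potential μ (x + 1) := ihP (x + 1)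
          linarith
        · rw [min_eq_right h1, min_eq_right h2]
          have := hPc x
          linarith
      · intro x
        rw [hdef]
        exact min_le_right _ _
  refine ⟨fun t => (key t).1, fun t x => ?_⟩
  have hdef : evol μ (t + 1) x
      = min ((evol μ t (x - 1) + evol μ t (x + 1)) / 2) (potential μ x) := rfl
  rw [hdef]
  refine le_min ?_ ((key t).2 x)
  have := (key t).1 x
  linarith
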